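/- arXiv:1201.0188 — 6 statements merged into one kernel-verified Lean document; each statement's English description precedes it below -/
import Mathlib

section
/- Let X be a compact Hausdorff topological space and let (ι, ≤) be a nonempty directed set. Let (f_j)_{j∈ι} be a net of upper semicontinuous functions f_j : X → ℝ that is pointwise decreasing (j ≤ k implies f_k(x) ≤ f_j(x) for all x ∈ X) and uniformly bounded (there is C > 0 with |f_j(x)| ≤ C for all j and all x), and assume that f_j converges pointwise to a function f : X → ℝ. Let (μ_j)_{j∈ι} be a net of finite Borel measures on X converging weakly to a finite regular Borel measure μ, i.e. ∫ g dμ_j → ∫ g dμ along the atTop filter on ι for every continuous g : X → ℝ. Then limsup_j ∫_X f_j dμ_j ≤ ∫_X f dμ. -/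
/-!
The limit `flim` is upper semicontinuous and bounded. By the Vitali–Carathéodory theorem and a
partition-of-unity insertion argument, for every `ε > 0` there is a continuous `h > flim` with
`∫ h dμlim < ∫ flim dμlim + ε`. A Dini-type compactness argument gives an index `k` with
`f k < h` everywhere, hence `f j ≤ h` for `j ≥ k`, and weak convergence yields
`limsup ∫ f j dμ j ≤ lim ∫ h dμ j = ∫ h dμlim`.
-/

open Filter MeasureTheory Set

section Semicontinuity

variable {X : Type*} [TopologicalSpace X]

theorem UpperSemicontinuous.isOpen_setOf_lt {β : Type*} [LinearOrder β] [DenselyOrdered β]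
    {u v : X → β} (hu : UpperSemicontinuous u) (hv : LowerSemicontinuous v) :
    IsOpen {x | u x < v x} := by
  refine isOpen_iff_mem_nhds.2 fun x hx => ?_
  obtain ⟨c, huc, hcv⟩ := exists_between hx
  filter_upwards [hu x c huc, hv x c hcv] with y hyu hyv using hyu.trans hyv

theorem upperSemicontinuous_of_forall_le_of_tendsto {ι : Type*} {l : Filter ι} [l.NeBot]
    {f : ι → X → ℝ} {g : X → ℝ} (hf : ∀ j, UpperSemicontinuous (f j)) (hle : ∀ j, g ≤ f j)
    (hlim : ∀ x, Tendsto (fun j => f j x) l (nhds (g x))) : UpperSemicontinuous g := by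
  intro x c hc
  obtain ⟨j, hj⟩ := ((hlim x).eventually_lt_const hc).exists
  exact (hf j x c hj).mono fun y hy => (hle j y).trans_lt hy

theorem exists_forall_lt_of_antitone [CompactSpace X] {ι β : Type*} [Preorder ι] [Nonempty ι]
    [IsDirected ι (· ≤ ·)] [LinearOrder β] [DenselyOrdered β] {f : ι → X → β} {v : X → β}
    (hf : ∀ j, UpperSemicontinuous (f j)) (hanti : Antitone f) (hv : LowerSemicontinuous v)
    (hlt : ∀ x, ∃ j, f j x < v x) : ∃ k, ∀ x, f k x < v x := by
  obtain ⟨t, ht⟩ := isCompact_univ.elim_finite_subcover (fun j => {x | f j x < v x})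
    (fun j => (hf j).isOpen_setOf_lt hv) fun x _ => mem_iUnion.2 (hlt x)
  obtain ⟨k, hk⟩ := t.exists_le
  refine ⟨k, fun x => ?_⟩
  obtain ⟨j, hj, hjx⟩ := mem_iUnion₂.1 (ht (mem_univ x))
  exact (hanti (hk j hj) x).trans_lt hjx

theorem UpperSemicontinuous.exists_continuous_btwn [NormalSpace X] [ParacompactSpace X] {u : X → ℝ}
    {v : X → EReal} (hu : UpperSemicontinuous u) (hv : LowerSemicontinuous v)
    (huv : ∀ x, (u x : EReal) < v x) : ∃ h : C(X, ℝ), ∀ x, u x < h x ∧ (h x : EReal) < v x := by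
  refine exists_continuous_forall_mem_convex_of_local_const
    (t := fun x => Ioi (u x) ∩ Real.toEReal ⁻¹' Iio (v x))
    (fun x => (convex_Ioi _).inter
      (ordConnected_Iio.preimage_mono EReal.coe_strictMono.monotone).convex)
    fun x => ?_
  obtain ⟨c, huc, hcv⟩ := EReal.lt_iff_exists_real_btwn.1 (huv x)
  exact ⟨c, (hu x c (EReal.coe_lt_coe_iff.1 huc)).and (hv x c hcv)⟩

end Semicontinuity

section Integral

variable {X : Type*} [TopologicalSpace X] [CompactSpace X] [MeasurableSpace X] [BorelSpace X]

theorem UpperSemicontinuous.exists_continuous_gt_integral_lt [T2Space X] {μ : Measure X}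
    [IsFiniteMeasure μ] [μ.WeaklyRegular] {u : X → ℝ} (hu : UpperSemicontinuous u)
    (hint : Integrable u μ) {ε : ℝ} (hε : 0 < ε) :
    ∃ h : C(X, ℝ), (∀ x, u x < h x) ∧ ∫ x, h x ∂μ < ∫ x, u x ∂μ + ε := by
  obtain ⟨g, hug, hg, hg_int, hg_top, hg_lt⟩ := exists_lt_lowerSemicontinuous_integral_lt u hint hε
  obtain ⟨h, hh⟩ := hu.exists_continuous_btwn hg hug
  refine ⟨h, fun x => (hh x).1, lt_of_le_of_lt ?_ hg_lt⟩
  refine integral_mono_ae (h.continuous.integrable_of_hasCompactSupport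
    (HasCompactSupport.of_compactSpace _)) hg_int ?_
  filter_upwards [hg_top] with x hx
  simpa using EReal.toReal_le_toReal (hh x).2.le (EReal.coe_ne_bot _) hx.ne

theorem limsup_integral_le_integral_of_tendsto {ι : Type*} {l : Filter ι} [l.NeBot]
    {μ : ι → Measure X} [∀ j, IsFiniteMeasure (μ j)] {ν : Measure X} [IsFiniteMeasure ν]
    (hweak : ∀ g : C(X, ℝ), Tendsto (fun j => ∫ x, g x ∂(μ j)) l (nhds (∫ x, g x ∂ν)))
    {f : ι → X → ℝ} {b : ℝ} (hf : ∀ j, Integrable (f j) (μ j)) (hb : ∀ j x, b ≤ f j x)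
    {h : C(X, ℝ)} (hfh : ∀ᶠ j in l, ∀ x, f j x ≤ h x) :
    limsup (fun j => ∫ x, f j x ∂(μ j)) l ≤ ∫ x, h x ∂ν := by
  have hmass : Tendsto (fun j => (μ j).real univ) l (nhds (ν.real univ)) := by
    simpa using hweak (ContinuousMap.const X 1)
  -- Without this lower bound `limsup` in `ℝ` could take its junk value.
  have hcob : IsCoboundedUnder (· ≤ ·) l (fun j => ∫ x, f j x ∂(μ j)) := by
    refine isCoboundedUnder_le_of_eventually_le l (x := b * ν.real univ - 1) ?_
    filter_upwards [(hmass.const_mul b).eventually_const_lt (sub_one_lt _)] with j hj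
    have hbf := integral_mono (integrable_const b) (hf j) (hb j)
    rw [integral_const, smul_eq_mul, mul_comm] at hbf
    exact hj.le.trans hbf
  rw [← (hweak h).limsup_eq]
  refine limsup_le_limsup ?_ hcob (hweak h).isBoundedUnder_le
  filter_upwards [hfh] with j hj
  exact integral_mono (hf j) (h.continuous.integrable_of_hasCompactSupport
    (HasCompactSupport.of_compactSpace _)) hj

end Integral

theorem stmt0_general
    {X : Type*} [TopologicalSpace X] [CompactSpace X] [T2Space X]
    [MeasurableSpace X] [BorelSpace X]
    {ι : Type*} [Preorder ι] [Nonempty ι] [IsDirected ι (· ≤ ·)]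
    (f : ι → X → ℝ) (flim : X → ℝ)
    (husc : ∀ j, UpperSemicontinuous (f j))
    (hdec : ∀ j k, j ≤ k → ∀ x, f k x ≤ f j x)
    (hbdd : ∃ C > 0, ∀ j x, |f j x| ≤ C)
    (hptwise : ∀ x, Tendsto (fun j => f j x) atTop (nhds (flim x)))
    (μ : ι → Measure X) (hfin : ∀ j, IsFiniteMeasure (μ j))
    (μlim : Measure X) [IsFiniteMeasure μlim] [μlim.InnerRegular]
    (hweak : ∀ g : C(X, ℝ),
      Tendsto (fun j => ∫ x, g x ∂(μ j)) atTop (nhds (∫ x, g x ∂μlim))) :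
    limsup (fun j => ∫ x, f j x ∂(μ j)) atTop ≤ ∫ x, flim x ∂μlim := by
  obtain ⟨C, -, hC⟩ := hbdd
  have hflim_le (j : ι) : flim ≤ f j := fun x =>
    le_of_tendsto (hptwise x) (eventually_atTop.2 ⟨j, fun k hk => hdec j k hk x⟩)
  have hflim_usc := upperSemicontinuous_of_forall_le_of_tendsto husc hflim_le hptwise
  have hflim_int : Integrable flim μlim :=
    .of_bound hflim_usc.measurable.aestronglyMeasurable C <| ae_of_all _ fun x =>
      le_of_tendsto (hptwise x).norm (.of_forall fun j => hC j x)
  have hf_int (j : ι) : Integrable (f j) (μ j) :=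
    .of_bound (husc j).measurable.aestronglyMeasurable C (ae_of_all _ (hC j))
  refine le_of_forall_pos_lt_add fun ε hε => ?_
  obtain ⟨h, hflim_h, hh_int⟩ := hflim_usc.exists_continuous_gt_integral_lt hflim_int hε
  obtain ⟨k, hk⟩ := exists_forall_lt_of_antitone husc hdec h.continuous.lowerSemicontinuous
    fun x => ((hptwise x).eventually_lt_const (hflim_h x)).exists
  calc limsup (fun j => ∫ x, f j x ∂(μ j)) atTop ≤ ∫ x, h x ∂μlim :=
        limsup_integral_le_integral_of_tendsto (μ := μ) hweak hf_int
          (fun j x => (abs_le.1 (hC j x)).1)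
          (eventually_atTop.2 ⟨k, fun j hj x => (hdec k j hj x).trans (hk x).le⟩)
    _ < ∫ x, flim x ∂μlim + ε := hh_int

/-- For a decreasing, uniformly bounded net of usc functions `f j`
converging pointwise to `flim`, and a net of finite Borel measures `μ j`
converging weakly to a finite regular Borel measure `μlim`, we have
`limsup_j ∫ f_j dμ_j ≤ ∫ flim dμlim`. -/
theorem stmt0
    {X : Type*} [TopologicalSpace X] [CompactSpace X] [T2Space X]
    [MeasurableSpace X] [BorelSpace X]
    {ι : Type*} [Preorder ι] [Nonempty ι] [IsDirected ι (· ≤ ·)]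
    (f : ι → X → ℝ) (flim : X → ℝ)
    (husc : ∀ j, UpperSemicontinuous (f j))
    (hdec : ∀ j k, j ≤ k → ∀ x, f k x ≤ f j x)
    (hbdd : ∃ C > 0, ∀ j x, |f j x| ≤ C)
    (hptwise : ∀ x, Tendsto (fun j => f j x) atTop (nhds (flim x)))
    (μ : ι → Measure X) (hfin : ∀ j, IsFiniteMeasure (μ j))
    (μlim : Measure X) [IsFiniteMeasure μlim] [μlim.OuterRegular] [μlim.InnerRegular]
    (hweak : ∀ g : C(X, ℝ),
      Tendsto (fun j => ∫ x, g x ∂(μ j)) atTop (nhds (∫ x, g x ∂μlim))) :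
    limsup (fun j => ∫ x, f j x ∂(μ j)) atTop ≤ ∫ x, flim x ∂μlim :=
  stmt0_general f flim husc hdec hbdd hptwise μ hfin μlim hweak
end

section
/- Let X be a compact Hausdorff topological space, (ι, ≤) a nonempty directed set, and M > 0. Let (μ_j)_{j∈ι} be a net of Borel measures on X with μ_j(X) ≤ M for all j, converging weakly to a finite Borel measure μ (i.e. ∫ g dμ_j → ∫ g dμ along atTop for every continuous g : X → ℝ). Let h : X → ℝ be a bounded Borel measurable function with the following property: for every ε > 0 there exists an open set G ⊆ X such that the restriction of h to X∖G is continuous, μ_j(G) ≤ ε for every j ∈ ι, and μ(G) ≤ ε. Then ∫_X h dμ_j → ∫_X h dμ along the atTop filter on ι. -/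
/-!
Given `ε > 0`, take an open set `G` of small mass for all the measures on whose complement `h` is
continuous, and extend `h|Gᶜ` by Tietze to a continuous `g` with the same bound `C`. Since `h = g`
off `G`, the integrals of `h` and `g` differ by at most `2C · mass(G)` uniformly in `j` and for the
limit, while the integrals of `g` converge by weak convergence; an `ε/3` argument concludes.
-/

open Filter MeasureTheory Set Topology

lemma Filter.tendsto_of_forall_eventually_dist_le_of_tendsto {α E : Type*} [PseudoMetricSpace E]
    {l : Filter α} {u : α → E} {a : E}
    (happrox : ∀ ε > 0, ∃ (v : α → E) (b : E), Tendsto v l (𝓝 b) ∧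
      (∀ᶠ j in l, dist (u j) (v j) ≤ ε) ∧ dist b a ≤ ε) :
    Tendsto u l (𝓝 a) := by
  refine Metric.tendsto_nhds.2 fun ε hε => ?_
  obtain ⟨v, b, hvb, huv, hba⟩ := happrox (ε / 4) (by positivity)
  filter_upwards [huv, Metric.tendsto_nhds.1 hvb (ε / 4) (by positivity)] with j hj hvj
  calc dist (u j) a ≤ dist (u j) (v j) + dist (v j) b + dist b a := dist_triangle4 _ _ _ _
    _ < ε := by linarith

lemma abs_integral_sub_le_of_eqOn_compl {X : Type*} [MeasurableSpace X] {ν : Measure X}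
    {f g : X → ℝ} {G : Set X} {C δ : ℝ} (hf : Integrable f ν) (hg : Integrable g ν)
    (hfg : EqOn f g Gᶜ) (hC : ∀ x, |f x - g x| ≤ C) (hC0 : 0 ≤ C) (hδ : 0 ≤ δ)
    (hG : ν G ≤ ENNReal.ofReal δ) :
    |∫ x, f x ∂ν - ∫ x, g x ∂ν| ≤ C * δ := by
  have hsub_zero : ∀ x ∉ G, f x - g x = 0 := fun x hx => sub_eq_zero.2 (hfg hx)
  rw [← integral_sub hf hg, ← setIntegral_eq_integral_of_forall_compl_eq_zero hsub_zero]
  calc |∫ x in G, f x - g x ∂ν|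
      ≤ C * ν.real G := by
        simpa only [Real.norm_eq_abs] using norm_setIntegral_le_of_norm_le_const
          (hG.trans_lt ENNReal.ofReal_lt_top) fun x _ => (Real.norm_eq_abs _).trans_le (hC x)
    _ ≤ C * δ := mul_le_mul_of_nonneg_left (ENNReal.toReal_le_of_le_ofReal hδ hG) hC0

lemma exists_continuousMap_eqOn_compl_of_continuousOn {X : Type*} [TopologicalSpace X]
    [NormalSpace X] {h : X → ℝ} {G : Set X} {C : ℝ} (hG : IsOpen G) (hcont : ContinuousOn h Gᶜ)
    (hC : ∀ x, |h x| ≤ C) (hC0 : 0 ≤ C) :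
    ∃ g : C(X, ℝ), EqOn g h Gᶜ ∧ ∀ x, |g x| ≤ C := by
  obtain ⟨g, hg_mem, hg_restrict⟩ := ContinuousMap.exists_restrict_eq_forall_mem_of_closed
    ⟨Gᶜ.domRestrict h, continuousOn_iff_continuous_domRestrict.1 hcont⟩ (t := Icc (-C) C)
    (fun x => abs_le.1 (hC x)) ⟨0, by constructor <;> linarith⟩ hG.isClosed_compl
  exact ⟨g, fun x hx => congrFun (congrArg DFunLike.coe hg_restrict) ⟨x, hx⟩,
    fun x => abs_le.2 (hg_mem x)⟩

theorem stmt2_general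
    {X : Type*} [TopologicalSpace X] [CompactSpace X] [T2Space X]
    [MeasurableSpace X] [BorelSpace X]
    {ι : Type*} [Preorder ι]
    (M : ℝ)
    (μ : ι → Measure X) (hμM : ∀ j, μ j Set.univ ≤ ENNReal.ofReal M)
    (μlim : Measure X) [IsFiniteMeasure μlim]
    (hweak : ∀ g : C(X, ℝ),
      Tendsto (fun j => ∫ x, g x ∂(μ j)) atTop (nhds (∫ x, g x ∂μlim)))
    (h : X → ℝ) (hmeas : Measurable h) (hbdd : ∃ C, ∀ x, |h x| ≤ C)
    (hquasi : ∀ ε : ℝ, 0 < ε → ∃ G : Set X, IsOpen G ∧ ContinuousOn h Gᶜ ∧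
      (∀ j, μ j G ≤ ENNReal.ofReal ε) ∧ μlim G ≤ ENNReal.ofReal ε) :
    Tendsto (fun j => ∫ x, h x ∂(μ j)) atTop (nhds (∫ x, h x ∂μlim)) := by
  have (j : ι) : IsFiniteMeasure (μ j) := ⟨(hμM j).trans_lt ENNReal.ofReal_lt_top⟩
  obtain ⟨C₀, hC₀⟩ := hbdd
  set C := max C₀ 0
  have hC (x : X) : |h x| ≤ C := (hC₀ x).trans (le_max_left _ _)
  refine tendsto_of_forall_eventually_dist_le_of_tendsto fun ε hε => ?_
  obtain ⟨G, hG, hcont, hGμ, hGμlim⟩ := hquasi (ε / (2 * C + 1)) (by positivity)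
  obtain ⟨g, hgh, hgC⟩ := exists_continuousMap_eqOn_compl_of_continuousOn hG hcont hC
    (le_max_right _ _)
  have hclose (ν : Measure X) [IsFiniteMeasure ν] (hν : ν G ≤ ENNReal.ofReal (ε / (2 * C + 1))) :
      |∫ x, h x ∂ν - ∫ x, g x ∂ν| ≤ ε := by
    have hdiff (x : X) : |h x - g x| ≤ 2 * C := by
      linarith [abs_sub (h x) (g x), hC x, hgC x]
    refine (abs_integral_sub_le_of_eqOn_compl
      (.of_bound hmeas.aestronglyMeasurable C (ae_of_all _ hC))
      (.of_bound g.continuous.aestronglyMeasurable C (ae_of_all _ hgC))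
      hgh.symm hdiff (by positivity) (by positivity) hν).trans ?_
    rw [mul_div_assoc']
    exact div_le_of_le_mul₀ (by positivity) hε.le (by linarith)
  refine ⟨fun j => ∫ x, g x ∂(μ j), ∫ x, g x ∂μlim, hweak g,
    .of_forall fun j => hclose (μ j) (hGμ j), ?_⟩
  rw [Real.dist_eq, abs_sub_comm]
  exact hclose μlim hGμlim

/-- convergence of integrals of a bounded quasicontinuous function
against a weakly converging net of measures of uniformly bounded mass. -/
theorem stmt2
    {X : Type*} [TopologicalSpace X] [CompactSpace X] [T2Space X]
    [MeasurableSpace X] [BorelSpace X]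
    {ι : Type*} [Preorder ι] [Nonempty ι] [IsDirected ι (· ≤ ·)]
    (M : ℝ) (hM : 0 < M)
    (μ : ι → Measure X) (hμM : ∀ j, μ j Set.univ ≤ ENNReal.ofReal M)
    (μlim : Measure X) [IsFiniteMeasure μlim]
    (hweak : ∀ g : C(X, ℝ),
      Tendsto (fun j => ∫ x, g x ∂(μ j)) atTop (nhds (∫ x, g x ∂μlim)))
    (h : X → ℝ) (hmeas : Measurable h) (hbdd : ∃ C, ∀ x, |h x| ≤ C)
    (hquasi : ∀ ε : ℝ, 0 < ε → ∃ G : Set X, IsOpen G ∧ ContinuousOn h Gᶜ ∧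
      (∀ j, μ j G ≤ ENNReal.ofReal ε) ∧ μlim G ≤ ENNReal.ofReal ε) :
    Tendsto (fun j => ∫ x, h x ∂(μ j)) atTop (nhds (∫ x, h x ∂μlim)) :=
  stmt2_general M μ hμM μlim hweak h hmeas hbdd hquasi
end

section
/- Let n ≥ 1 be a natural number and M ≥ 1 a real number. Let a_0, a_1, …, a_n be nonnegative real numbers such that a_k ≤ 2·√(M·a_{k+1}) for every 0 ≤ k ≤ n − 1. Then a_0 ≤ 4·M·(a_n)^{2^{-n}}. -/
/-- iterated square-root inequality: if `a k ≤ 2√(M a (k+1))` for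
`k < n`, with all `a k` (for `k ≤ n`) nonnegative and `M ≥ 1`, then
`a 0 ≤ 4 M (a n)^(2⁻ⁿ)`. -/
theorem stmt4 (n : ℕ) (hn : 1 ≤ n) (M : ℝ) (hM : 1 ≤ M)
    (a : ℕ → ℝ) (hpos : ∀ k ≤ n, 0 ≤ a k)
    (hrec : ∀ k < n, a k ≤ 2 * Real.sqrt (M * a (k + 1))) :
    a 0 ≤ 4 * M * (a n) ^ ((1 : ℝ) / 2 ^ n) := by
  induction n, hn using Nat.le_induction generalizing a with
  | base =>
    have h0 := hrec 0 (by norm_num)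
    have ha1 : 0 ≤ a 1 := hpos 1 le_rfl
    have hsplit : Real.sqrt (M * a 1) = Real.sqrt M * Real.sqrt (a 1) :=
      Real.sqrt_mul (by linarith) _
    have hsM : Real.sqrt M ≤ M := by
      nlinarith [Real.sq_sqrt (show (0:ℝ) ≤ M by linarith), Real.sqrt_nonneg M]
    have hs : Real.sqrt (a 1) = a 1 ^ ((1:ℝ)/2^1) := by
      rw [Real.sqrt_eq_rpow]; norm_num
    have hsq := Real.sqrt_nonneg (a 1)
    calc a 0 ≤ 2 * Real.sqrt (M * a 1) := h0
      _ = 2 * (Real.sqrt M * Real.sqrt (a 1)) := by rw [hsplit]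
      _ ≤ 2 * (M * Real.sqrt (a 1)) := by nlinarith
      _ ≤ 4 * M * Real.sqrt (a 1) := by nlinarith
      _ = 4 * M * a 1 ^ ((1:ℝ)/2^1) := by rw [hs]
  | succ n hn ih =>
    have hM0 : (0:ℝ) ≤ M := by linarith
    have h1 : a 1 ≤ 4 * M * (a (n+1)) ^ ((1:ℝ)/2^n) :=
      ih (fun k => a (k+1)) (fun k hk => hpos (k+1) (by omega))
        (fun k hk => hrec (k+1) (by omega))
    have han : 0 ≤ a (n+1) := hpos (n+1) (by omega)
    set X : ℝ := a (n+1) ^ ((1:ℝ)/2^n) with hXdef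
    have hX : 0 ≤ X := Real.rpow_nonneg han _
    have ha1 : 0 ≤ a 1 := hpos 1 (by omega)
    have h0 := hrec 0 (by omega)
    have hmono : Real.sqrt (M * a 1) ≤ Real.sqrt ((2*M)^2 * X) := by
      apply Real.sqrt_le_sqrt
      nlinarith
    have hsq : Real.sqrt ((2*M)^2 * X) = 2 * M * Real.sqrt X := by
      rw [Real.sqrt_mul (by positivity), Real.sqrt_sq (by linarith)]
    have hXs : Real.sqrt X = a (n+1) ^ ((1:ℝ)/2^(n+1)) := by
      rw [hXdef, Real.sqrt_eq_rpow, ← Real.rpow_mul han]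
      congr 1
      rw [pow_succ]
      field_simp
    calc a 0 ≤ 2 * Real.sqrt (M * a 1) := h0
      _ ≤ 2 * Real.sqrt ((2*M)^2 * X) := by linarith
      _ = 4 * M * Real.sqrt X := by rw [hsq]; ring
      _ = 4 * M * a (n+1) ^ ((1:ℝ)/2^(n+1)) := by rw [hXs]
end

section
/- Let X be a compact Hausdorff topological space and μ a finite Borel measure on X. Let E : C(X,ℝ) → ℝ be concave (E((1−t)u + t v) ≥ (1−t)E(u) + t E(v) for all u, v ∈ C(X,ℝ) and t ∈ [0,1]), monotone (u ≤ v pointwise implies E(u) ≤ E(v)), and translation-equivariant (E(u + c) = E(u) + c for every constant c ∈ ℝ). Let P : C(X,ℝ) → C(X,ℝ) be concave (P((1−t)u + t v) ≥ (1−t)P(u) + t P(v) pointwise), monotone (u ≤ v pointwise implies P(u) ≤ P(v) pointwise), and 1-Lipschitz for the supremum norm. Fix f, g ∈ C(X,ℝ), and assume that for every ψ ∈ C(X,ℝ) the right derivative at t = 0 of t ↦ E((1−t)·P(f) + t·ψ) exists and equals ∫_X (ψ − P(f)) dμ. Then the right derivatives at t = 0 of t ↦ E(P(f + t·g)) and of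 t ↦ ∫_X P(f + t·g) dμ both exist and are equal. -/
/-!
`ℓ t = ∫ P (f + t • g) dμ` is concave in `t`, so its difference quotients at `0` converge to a
right derivative `L`. By concavity of `E`, the directional derivatives in `hderiv` are
supergradient inequalities `E ψ - E (P f) ≤ ∫ (ψ - P f) dμ`, which bound the quotients of
`t ↦ E (P (f + t • g))` above by those of `ℓ`. Conversely, for `0 < t ≤ s` concavity of `P` puts
`P (f + t • g)` above the chord `(1 - t/s) • P f + (t/s) • P (f + s • g)`; by monotonicity of `E`
and `hderiv` along that chord, the quotients of `E ∘ P` are eventually above anything less than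
`(ℓ s - ℓ 0) / s`, and these slopes tend to `L` as `s → 0⁺`.
-/

open Filter MeasureTheory Set Topology

section Linearization

variable {V β : Type*} [AddCommGroup V] [Module ℝ V]

theorem concaveOn_univ_of_forall_Icc [AddCommMonoid β] [PartialOrder β] [SMul ℝ β] {F : V → β}
    (h : ∀ u v, ∀ t ∈ Icc (0 : ℝ) 1, (1 - t) • F u + t • F v ≤ F ((1 - t) • u + t • v)) :
    ConcaveOn ℝ univ F := by
  refine ⟨convex_univ, fun u _ v _ a b ha hb hab => ?_⟩
  obtain rfl : a = 1 - b := by linarith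
  exact h u v b ⟨hb, by linarith⟩

theorem ConcaveOn.comp_add_smul [AddCommMonoid β] [PartialOrder β] [SMul ℝ β] {F : V → β}
    (hF : ConcaveOn ℝ univ F) (v w : V) : ConcaveOn ℝ univ fun t : ℝ => F (v + t • w) := by
  refine ⟨convex_univ, fun a _ b _ p q hp hq hpq => ?_⟩
  convert hF.2 (mem_univ (v + a • w)) (mem_univ (v + b • w)) hp hq hpq using 2
  rw [smul_add, smul_add, add_add_add_comm, ← add_smul, hpq, one_smul, smul_smul, smul_smul,
    ← add_smul, smul_eq_mul, smul_eq_mul]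

theorem ConcaveOn.monotone_linearMap_comp [PartialOrder V] {s : Set ℝ} {φ : ℝ → V}
    (hφ : ConcaveOn ℝ s φ) (I : V →ₗ[ℝ] ℝ) (hI : Monotone I) :
    ConcaveOn ℝ s fun t => I (φ t) :=
  ⟨hφ.1, fun a ha b hb p q hp hq hpq => by
    simpa only [map_add, map_smul] using hI (hφ.2 ha hb hp hq hpq)⟩

theorem ConcaveOn.sub_le_of_tendsto_slope {E : V → ℝ} (hE : ConcaveOn ℝ univ E) {u v : V} {D : ℝ}
    (h : Tendsto (fun t : ℝ => (E ((1 - t) • u + t • v) - E u) / t) (𝓝[>] 0) (𝓝 D)) :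
    E v - E u ≤ D := by
  refine ge_of_tendsto h ?_
  filter_upwards [Ioc_mem_nhdsGT zero_lt_one] with t ⟨ht₀, ht₁⟩
  rw [le_div_iff₀ ht₀]
  have := hE.2 (mem_univ u) (mem_univ v) (sub_nonneg.2 ht₁) ht₀.le (sub_add_cancel 1 t)
  simp only [smul_eq_mul] at this
  linarith

theorem ConcaveOn.hasDerivWithinAt_rightDeriv_of_mem_interior {S : Set ℝ} {f : ℝ → ℝ} {x : ℝ}
    (hf : ConcaveOn ℝ S f) (hx : x ∈ interior S) :
    HasDerivWithinAt f (derivWithin f (Ioi x) x) (Ioi x) x := by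
  have := (hf.neg.differentiableWithinAt_Ioi_of_mem_interior hx).neg
  simp only [neg_neg] at this
  exact this.hasDerivWithinAt

variable [PartialOrder V] {E : V → ℝ} {φ : ℝ → V}

theorem tendsto_nhdsGT_div_const {s : ℝ} (hs : 0 < s) :
    Tendsto (fun t : ℝ => t / s) (𝓝[>] 0) (𝓝[>] 0) := by
  refine tendsto_nhdsWithin_of_tendsto_nhds_of_eventually_within _ ?_ ?_
  · simpa using (tendsto_id.div_const s).mono_left (nhdsWithin_le_nhds (a := (0 : ℝ)))
  · filter_upwards [self_mem_nhdsWithin] with t ht using div_pos ht hs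

theorem eventually_lt_slope_comp (hEmono : Monotone E) (hφ : ConcaveOn ℝ univ φ) {s D : ℝ}
    (hs : 0 < s)
    (hD : Tendsto (fun t : ℝ => (E ((1 - t) • φ 0 + t • φ s) - E (φ 0)) / t) (𝓝[>] 0) (𝓝 D))
    {a : ℝ} (ha : a < D / s) : ∀ᶠ t in 𝓝[>] 0, a < slope (E ∘ φ) 0 t := by
  have hrescaled := (hD.comp (tendsto_nhdsGT_div_const hs)).div_const s
  filter_upwards [hrescaled.eventually (eventually_gt_nhds ha), Ioc_mem_nhdsGT hs]
    with t hlt ⟨ht₀, hts⟩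
  have hchord : (1 - t / s) • φ 0 + (t / s) • φ s ≤ φ t := by
    have := hφ.2 (mem_univ 0) (mem_univ s) (sub_nonneg.2 ((div_le_one hs).2 hts))
      (div_pos ht₀ hs).le (sub_add_cancel 1 (t / s))
    rwa [smul_zero, zero_add, smul_eq_mul, div_mul_cancel₀ t hs.ne'] at this
  calc a < (E ((1 - t / s) • φ 0 + (t / s) • φ s) - E (φ 0)) / t := by
        simpa only [Function.comp_apply, div_div, div_mul_cancel₀ t hs.ne'] using hlt
    _ ≤ slope (E ∘ φ) 0 t := by
        rw [slope_def_field, sub_zero]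
        exact div_le_div_of_nonneg_right (sub_le_sub_right (hEmono hchord) _) ht₀.le

theorem ConcaveOn.exists_tendsto_slope_comp_and_linearMap_comp (hE : ConcaveOn ℝ univ E)
    (hEmono : Monotone E) (hφ : ConcaveOn ℝ univ φ) (I : V →ₗ[ℝ] ℝ) (hI : Monotone I)
    (hderiv : ∀ ψ, Tendsto (fun t : ℝ => (E ((1 - t) • φ 0 + t • ψ) - E (φ 0)) / t) (𝓝[>] 0)
      (𝓝 (I ψ - I (φ 0)))) :
    ∃ L, Tendsto (slope (E ∘ φ) 0) (𝓝[>] 0) (𝓝 L) ∧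
      Tendsto (slope (I ∘ φ) 0) (𝓝[>] 0) (𝓝 L) := by
  have hIφ : ConcaveOn ℝ univ (I ∘ φ) := hφ.monotone_linearMap_comp I hI
  have hL := hIφ.hasDerivWithinAt_rightDeriv_of_mem_interior (x := 0) (by simp)
  set L := derivWithin (I ∘ φ) (Ioi 0) 0
  have hslope : Tendsto (slope (I ∘ φ) 0) (𝓝[>] 0) (𝓝 L) :=
    (hasDerivWithinAt_iff_tendsto_slope' (lt_irrefl 0)).1 hL
  have hupper : ∀ t > 0, slope (E ∘ φ) 0 t ≤ slope (I ∘ φ) 0 t := fun t ht => by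
    simp only [slope_def_field, sub_zero, Function.comp_apply]
    exact div_le_div_of_nonneg_right (hE.sub_le_of_tendsto_slope (hderiv (φ t))) ht.le
  refine ⟨L, tendsto_order.2 ⟨fun a ha => ?_, fun a ha => ?_⟩, hslope⟩
  · obtain ⟨s, has, hs⟩ :=
      ((hslope.eventually (eventually_gt_nhds ha)).and self_mem_nhdsWithin).exists
    refine eventually_lt_slope_comp hEmono hφ hs (hderiv (φ s)) ?_
    simpa only [slope_def_field, sub_zero, Function.comp_apply, map_sub] using has
  · filter_upwards [hslope.eventually (eventually_lt_nhds ha), self_mem_nhdsWithin] with t hlt ht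
    exact (hupper t ht).trans_lt hlt

end Linearization

section ContinuousFunctions

variable {X : Type*} [TopologicalSpace X] [CompactSpace X] [MeasurableSpace X] [BorelSpace X]
  (μ : Measure X) [IsFiniteMeasure μ]

theorem ContinuousMap.integrable_of_compactSpace (ψ : C(X, ℝ)) : Integrable ψ μ :=
  ψ.continuous.integrable_of_hasCompactSupport (HasCompactSupport.of_compactSpace _)

@[simps]
noncomputable def ContinuousMap.integralLinearMap : C(X, ℝ) →ₗ[ℝ] ℝ where
  toFun ψ := ∫ x, ψ x ∂μ
  map_add' ψ χ := integral_add (ψ.integrable_of_compactSpace μ) (χ.integrable_of_compactSpace μ)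
  map_smul' c _ := integral_smul c _

theorem ContinuousMap.monotone_integralLinearMap : Monotone (integralLinearMap μ) :=
  fun _ _ h => integral_mono (integrable_of_compactSpace μ _) (integrable_of_compactSpace μ _) h

end ContinuousFunctions

theorem stmt5_general
    {X : Type*} [TopologicalSpace X] [CompactSpace X]
    [MeasurableSpace X] [BorelSpace X]
    (μ : Measure X) [IsFiniteMeasure μ]
    (E : C(X, ℝ) → ℝ)
    (hEconc : ∀ u v : C(X, ℝ), ∀ t ∈ Set.Icc (0:ℝ) 1,
      (1 - t) * E u + t * E v ≤ E ((1 - t) • u + t • v))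
    (hEmono : ∀ u v : C(X, ℝ), (∀ x, u x ≤ v x) → E u ≤ E v)
    (P : C(X, ℝ) → C(X, ℝ))
    (hPconc : ∀ u v : C(X, ℝ), ∀ t ∈ Set.Icc (0:ℝ) 1, ∀ x : X,
      (1 - t) * P u x + t * P v x ≤ P ((1 - t) • u + t • v) x)
    (f g : C(X, ℝ))
    (hderiv : ∀ ψ : C(X, ℝ),
      Tendsto (fun t : ℝ => (E ((1 - t) • P f + t • ψ) - E (P f)) / t)
        (nhdsWithin 0 (Set.Ioi 0))
        (nhds (∫ x, (ψ x - P f x) ∂μ))) :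
    ∃ L : ℝ,
      Tendsto (fun t : ℝ => (E (P (f + t • g)) - E (P f)) / t)
        (nhdsWithin 0 (Set.Ioi 0)) (nhds L) ∧
      Tendsto (fun t : ℝ => ((∫ x, P (f + t • g) x ∂μ) - ∫ x, P f x ∂μ) / t)
        (nhdsWithin 0 (Set.Ioi 0)) (nhds L) := by
  have hP : ConcaveOn ℝ univ P := concaveOn_univ_of_forall_Icc fun u v t ht =>
    ContinuousMap.le_def.2 fun x => by simpa using hPconc u v t ht x
  have hφ0 : P (f + (0 : ℝ) • g) = P f := by rw [zero_smul, add_zero]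
  obtain ⟨L, hE, hI⟩ :=
    (concaveOn_univ_of_forall_Icc hEconc).exists_tendsto_slope_comp_and_linearMap_comp
      (fun _ _ => hEmono _ _) (hP.comp_add_smul f g) (ContinuousMap.integralLinearMap μ)
      (ContinuousMap.monotone_integralLinearMap μ) fun ψ => by rw [hφ0, ← map_sub]; exact hderiv ψ
  refine ⟨L, ?_, ?_⟩
  · simpa only [slope_fun_def_field, sub_zero, Function.comp_apply, hφ0] using hE
  · simpa only [slope_fun_def_field, sub_zero, Function.comp_apply, hφ0,
      ContinuousMap.integralLinearMap_apply] using hI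

/-- linearization lemma for the derivative of the composed energy:
if `E` is concave, monotone and translation-equivariant, `P` is concave,
monotone and 1-Lipschitz, and for every `ψ` the right derivative at `t = 0` of
`t ↦ E((1−t)·P(f) + t·ψ)` equals `∫ (ψ − P(f)) dμ`, then the right derivatives
at `t = 0` of `t ↦ E(P(f + t·g))` and of `t ↦ ∫ P(f + t·g) dμ` both exist and
are equal. -/
theorem stmt5
    {X : Type*} [TopologicalSpace X] [CompactSpace X] [T2Space X]
    [MeasurableSpace X] [BorelSpace X]
    (μ : Measure X) [IsFiniteMeasure μ]
    (E : C(X, ℝ) → ℝ)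
    (hEconc : ∀ u v : C(X, ℝ), ∀ t ∈ Set.Icc (0:ℝ) 1,
      (1 - t) * E u + t * E v ≤ E ((1 - t) • u + t • v))
    (hEmono : ∀ u v : C(X, ℝ), (∀ x, u x ≤ v x) → E u ≤ E v)
    (hEtrans : ∀ (u : C(X, ℝ)) (c : ℝ), E (u + ContinuousMap.const X c) = E u + c)
    (P : C(X, ℝ) → C(X, ℝ))
    (hPconc : ∀ u v : C(X, ℝ), ∀ t ∈ Set.Icc (0:ℝ) 1, ∀ x : X,
      (1 - t) * P u x + t * P v x ≤ P ((1 - t) • u + t • v) x)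
    (hPmono : ∀ u v : C(X, ℝ), (∀ x, u x ≤ v x) → ∀ x, P u x ≤ P v x)
    (hPlip : LipschitzWith 1 P)
    (f g : C(X, ℝ))
    (hderiv : ∀ ψ : C(X, ℝ),
      Tendsto (fun t : ℝ => (E ((1 - t) • P f + t • ψ) - E (P f)) / t)
        (nhdsWithin 0 (Set.Ioi 0))
        (nhds (∫ x, (ψ x - P f x) ∂μ))) :
    ∃ L : ℝ,
      Tendsto (fun t : ℝ => (E (P (f + t • g)) - E (P f)) / t)
        (nhdsWithin 0 (Set.Ioi 0)) (nhds L) ∧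
      Tendsto (fun t : ℝ => ((∫ x, P (f + t • g) x ∂μ) - ∫ x, P f x ∂μ) / t)
        (nhdsWithin 0 (Set.Ioi 0)) (nhds L) :=
  stmt5_general μ E hEconc hEmono P hPconc f g hderiv
end

section
/- Let X be a compact Hausdorff topological space and ν a finite (positive) Borel measure on X. Let E : C(X,ℝ) → ℝ be monotone (u ≤ v pointwise implies E(u) ≤ E(v)), and let P : C(X,ℝ) → C(X,ℝ) be monotone (u ≤ v pointwise implies P(u) ≤ P(v) pointwise), idempotent (P(P(u)) = P(u) for all u), and satisfy P(u) ≤ u pointwise for all u. Fix f ∈ C(X,ℝ) and set g := P(f) − f (so g ≤ 0 pointwise). If the right derivative at ε = 0 of ε ↦ E(P(f + ε·g)) exists and equals ∫_X g dν, then ∫_X (f − P(f)) dν = 0. -/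
open Filter MeasureTheory Set

/-- differentiability of the composed energy along `g = P(f) − f`
implies the orthogonality relation `∫ (f − P(f)) dν = 0`. -/
theorem stmt6
    {X : Type*} [TopologicalSpace X] [CompactSpace X] [T2Space X]
    [MeasurableSpace X] [BorelSpace X]
    (ν : Measure X) [IsFiniteMeasure ν]
    (E : C(X, ℝ) → ℝ)
    (hEmono : ∀ u v : C(X, ℝ), (∀ x, u x ≤ v x) → E u ≤ E v)
    (P : C(X, ℝ) → C(X, ℝ))
    (hPmono : ∀ u v : C(X, ℝ), (∀ x, u x ≤ v x) → ∀ x, P u x ≤ P v x)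
    (hPidem : ∀ u : C(X, ℝ), P (P u) = P u)
    (hPle : ∀ u : C(X, ℝ), ∀ x, P u x ≤ u x)
    (f : C(X, ℝ))
    (hderiv : Tendsto
      (fun ε : ℝ => (E (P (f + ε • (P f - f))) - E (P f)) / ε)
      (nhdsWithin 0 (Set.Ioi 0))
      (nhds (∫ x, (P f x - f x) ∂ν))) :
    ∫ x, (f x - P f x) ∂ν = 0 := by
  have key : ∀ ε : ℝ, 0 < ε → ε ≤ 1 → P (f + ε • (P f - f)) = P f := by
    intro ε hε hε1
    have hg : ∀ x, P f x - f x ≤ 0 := fun x => sub_nonpos.2 (hPle f x)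
    have h1 : ∀ x, P f x ≤ (f + ε • (P f - f)) x := by
      intro x
      simp only [ContinuousMap.add_apply, ContinuousMap.smul_apply,
        ContinuousMap.sub_apply, smul_eq_mul]
      nlinarith [hg x]
    have h2 : ∀ x, (f + ε • (P f - f)) x ≤ f x := by
      intro x
      simp only [ContinuousMap.add_apply, ContinuousMap.smul_apply,
        ContinuousMap.sub_apply, smul_eq_mul]
      nlinarith [hg x]
    apply le_antisymm
    · exact fun x => hPmono _ _ h2 x
    · intro x
      have := hPmono _ _ h1 x
      rwa [hPidem] at this
  have hev : (fun ε : ℝ => (E (P (f + ε • (P f - f))) - E (P f)) / ε)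
      =ᶠ[nhdsWithin 0 (Set.Ioi 0)] fun _ => 0 := by
    filter_upwards [Ioc_mem_nhdsGT_of_mem (by norm_num : (0:ℝ) ∈ Ico 0 1)] with ε hε
    rw [key ε hε.1 hε.2, sub_self, zero_div]
  have h0 : Tendsto (fun ε : ℝ => (E (P (f + ε • (P f - f))) - E (P f)) / ε)
      (nhdsWithin 0 (Set.Ioi 0)) (nhds 0) := by
    rw [tendsto_congr' hev]; exact tendsto_const_nhds
  have hne : (nhdsWithin (0:ℝ) (Set.Ioi 0)).NeBot := nhdsGT_neBot 0
  have hint : ∫ x, (P f x - f x) ∂ν = 0 := tendsto_nhds_unique hderiv h0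
  have : ∫ x, (f x - P f x) ∂ν = - ∫ x, (P f x - f x) ∂ν := by
    rw [← integral_neg]; simp
  rw [this, hint, neg_zero]
end

section
/- Let (X, Σ) be a measurable space, let φ, ψ : X → ℝ be measurable functions, let μ be a probability measure on X and ν a finite measure on X. Assume that for every ε > 0 there exists a measure ρ_ε on X with ρ_ε(X) ≤ 1 such that ρ_ε(A) = ν(A) for every measurable set A ⊆ {x : φ(x) < ψ(x) − ε} and ρ_ε(A) = μ(A) for every measurable set A ⊆ {x : φ(x) > ψ(x) − ε}. Then ν({x : φ(x) < ψ(x)}) ≤ μ({x : φ(x) < ψ(x)}). -/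
open MeasureTheory Set

/-! Fix `ε > 0`. Since `ρ_ε` has mass at most `μ(X) = 1` and agrees with `μ` off `{φ ≤ ψ - ε}`,
it is dominated by `μ` on that set; on the other hand it agrees with `ν` on `{φ < ψ - ε}`. Hence
`ν {φ < ψ - ε} ≤ μ {φ ≤ ψ - ε} ≤ μ {φ < ψ}`, and letting `ε → 0` gives the claim by continuity
of `ν` from below. -/

section

variable {X : Type*} [MeasurableSpace X]

theorem measure_le_of_measure_univ_le_of_measure_compl_eq {ρ μ : Measure X} [IsFiniteMeasure μ]
    {s : Set X} (hs : MeasurableSet s) (huniv : ρ univ ≤ μ univ) (hcompl : ρ sᶜ = μ sᶜ) :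
    ρ s ≤ μ s := by
  refine ENNReal.le_of_add_le_add_right (measure_ne_top μ sᶜ) ?_
  rw [measure_add_measure_compl hs, ← hcompl, measure_add_measure_compl hs]
  exact huniv

theorem measure_setOf_lt_le_of_forall_sub (ν : Measure X) {f g : X → ℝ} {c : ENNReal}
    (h : ∀ ε : ℝ, 0 < ε → ν {x | f x < g x - ε} ≤ c) : ν {x | f x < g x} ≤ c := by
  have hunion : {x | f x < g x} = ⋃ n : ℕ, {x | f x < g x - 1 / (n + 1)} := by
    ext x
    simp only [mem_ofPred_eq, mem_iUnion]
    constructor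
    · intro hx
      obtain ⟨n, hn⟩ := exists_nat_one_div_lt (sub_pos.mpr hx)
      exact ⟨n, by linarith⟩
    · rintro ⟨n, hn⟩
      linarith [Nat.one_div_pos_of_nat (α := ℝ) (n := n)]
  have hmono : Monotone fun n : ℕ => {x | f x < g x - 1 / (n + 1)} := fun m n hmn =>
    ofPred_subset_ofPred.mpr fun _ hx => hx.trans_le (sub_le_sub_left (Nat.one_div_le_one_div hmn) _)
  rw [hunion, hmono.measure_iUnion]
  exact iSup_le fun n => h _ Nat.one_div_pos_of_nat

end

theorem stmt7_general
    {X : Type*} [MeasurableSpace X]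
    (φ ψ : X → ℝ) (hφ : Measurable φ) (hψ : Measurable ψ)
    (μ ν : Measure X) [IsProbabilityMeasure μ]
    (hloc : ∀ ε : ℝ, 0 < ε → ∃ ρ : Measure X, ρ Set.univ ≤ 1 ∧
      (∀ A : Set X, MeasurableSet A → A ⊆ {x | φ x < ψ x - ε} → ρ A = ν A) ∧
      (∀ A : Set X, MeasurableSet A → A ⊆ {x | φ x > ψ x - ε} → ρ A = μ A)) :
    ν {x | φ x < ψ x} ≤ μ {x | φ x < ψ x} := by
  refine measure_setOf_lt_le_of_forall_sub ν fun ε hε => ?_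
  obtain ⟨ρ, hρ_univ, hρν, hρμ⟩ := hloc ε hε
  have hle : MeasurableSet {x | φ x ≤ ψ x - ε} := measurableSet_le hφ (hψ.sub_const ε)
  calc ν {x | φ x < ψ x - ε}
      = ρ {x | φ x < ψ x - ε} :=
        (hρν _ (measurableSet_lt hφ (hψ.sub_const ε)) subset_rfl).symm
    _ ≤ ρ {x | φ x ≤ ψ x - ε} := measure_mono (ofPred_subset_ofPred.mpr fun _ => le_of_lt)
    _ ≤ μ {x | φ x ≤ ψ x - ε} :=
        measure_le_of_measure_univ_le_of_measure_compl_eq hle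
          (hρ_univ.trans_eq measure_univ.symm)
          (hρμ _ hle.compl fun x (hx : ¬φ x ≤ ψ x - ε) => not_le.mp hx)
    _ ≤ μ {x | φ x < ψ x} := measure_mono (ofPred_subset_ofPred.mpr fun _ hx => by linarith)

/-- abstract comparison principle from locality: if for every
`ε > 0` there is a measure of total mass at most 1 agreeing with `ν` on
subsets of `{φ < ψ − ε}` and with `μ` on subsets of `{φ > ψ − ε}`, then
`ν {φ < ψ} ≤ μ {φ < ψ}`. -/
theorem stmt7
    {X : Type*} [MeasurableSpace X]
    (φ ψ : X → ℝ) (hφ : Measurable φ) (hψ : Measurable ψ)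
    (μ ν : Measure X) [IsProbabilityMeasure μ] [IsFiniteMeasure ν]
    (hloc : ∀ ε : ℝ, 0 < ε → ∃ ρ : Measure X, ρ Set.univ ≤ 1 ∧
      (∀ A : Set X, MeasurableSet A → A ⊆ {x | φ x < ψ x - ε} → ρ A = ν A) ∧
      (∀ A : Set X, MeasurableSet A → A ⊆ {x | φ x > ψ x - ε} → ρ A = μ A)) :
    ν {x | φ x < ψ x} ≤ μ {x | φ x < ψ x} :=
  stmt7_general φ ψ hφ hψ μ ν hloc
end
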